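/- arXiv:2103.01723 — 2 statements merged into one kernel-verified Lean document; each statement's English description precedes it below -/
import Mathlib

section
/- Let n ≥ 1, 0 < s < 1, 1 ≤ p < ∞ and f ∈ W^{s,p}(ℝⁿ). Then lim_{ε→0⁺} ε^{−s} ‖f_ε − f‖_{L^p(ℝⁿ)} = 0, where f_ε := f ∗ φ_ε is the mollification of f; i.e., ‖f_ε − f‖_{L^p(ℝⁿ)} = o(ε^s). -/
open MeasureTheory Metric Set Filter Topology
open scoped ENNReal

noncomputable section

/-- Euclidean n-space. -/
abbrev Rn (n : ℕ) : Type := EuclideanSpace ℝ (Fin n)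

/-- The i-th standard basis vector. -/
def eVec (n : ℕ) (i : Fin n) : Rn n := EuclideanSpace.single i 1

/-- Partial derivative in the i-th coordinate direction. -/
def pderiv' {n : ℕ} {E : Type} [NormedAddCommGroup E] [NormedSpace ℝ E]
    (i : Fin n) (f : Rn n → E) (x : Rn n) : E :=
  fderiv ℝ f x (eVec n i)

/-- A smooth compactly supported test function with support inside Ω. -/
def IsTestFun {n : ℕ} (Ω : Set (Rn n)) (φ : Rn n → ℝ) : Prop :=
  ContDiff ℝ (⊤ : ℕ∞) φ ∧ HasCompactSupport φ ∧ tsupport φ ⊆ Ω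

/-- The Gagliardo fractional seminorm [f]_{W^{s,p}(Ω)} (valued in ℝ≥0∞). -/
def gagliardo {n : ℕ} {E : Type} [NormedAddCommGroup E]
    (s p : ℝ) (Ω : Set (Rn n)) (f : Rn n → E) : ℝ≥0∞ :=
  (∫⁻ x in Ω, ∫⁻ y in Ω,
    ENNReal.ofReal (‖f x - f y‖ ^ p / ‖x - y‖ ^ ((n : ℝ) + s * p))) ^ (1 / p)

/-- Membership in the fractional Sobolev space W^{s,p}(Ω):
f ∈ L^p(Ω) with finite Gagliardo seminorm. -/
def MemWsp {n : ℕ} {E : Type} [NormedAddCommGroup E]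
    (s p : ℝ) (Ω : Set (Rn n)) (f : Rn n → E) : Prop :=
  MemLp f (ENNReal.ofReal p) (volume.restrict Ω) ∧ gagliardo s p Ω f < ⊤

/-- A standard mollifier: smooth, supported in the closed unit ball, nonnegative,
with total integral 1. -/
structure IsMollifier {n : ℕ} (ψ : Rn n → ℝ) : Prop where
  smooth : ContDiff ℝ (⊤ : ℕ∞) ψ
  supp : tsupport ψ ⊆ Metric.closedBall 0 1
  nonneg : ∀ x, 0 ≤ ψ x
  integral_one : ∫ x, ψ x = 1

/-- Mollification f ∗ ψ_ε, where ψ_ε(z) := ε^{-n} ψ(z/ε). -/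
def mollify {n : ℕ} {E : Type} [NormedAddCommGroup E] [NormedSpace ℝ E]
    (ψ : Rn n → ℝ) (ε : ℝ) (f : Rn n → E) (x : Rn n) : E :=
  ∫ z, ((ε ^ n)⁻¹ * ψ (ε⁻¹ • z)) • f (x - z)

/-- Mollification of the extension of f by zero outside Ω. -/
def mollifyOn {n : ℕ} {E : Type} [NormedAddCommGroup E] [NormedSpace ℝ E]
    (Ω : Set (Rn n)) (ψ : Rn n → ℝ) (ε : ℝ) (f : Rn n → E) : Rn n → E :=
  mollify ψ ε (Ω.indicator f)

/-- Pointwise Jacobian determinant of a map ℝ² → ℝ². -/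
def jacDet2 (g : Rn 2 → Rn 2) (x : Rn 2) : ℝ :=
  pderiv' 0 (fun y => g y 0) x * pderiv' 1 (fun y => g y 1) x -
  pderiv' 1 (fun y => g y 0) x * pderiv' 0 (fun y => g y 1) x

/-- Pointwise Jacobian determinant of a map ℝⁿ → ℝⁿ. -/
def jacDetN {n : ℕ} (g : Rn n → Rn n) (x : Rn n) : ℝ :=
  (Matrix.of fun i j : Fin n => pderiv' j (fun y => g y i) x).det

/-- The Jacobian matrix ∇v of a map ℝ² → ℝ³ (3×2 matrix of partial derivatives). -/
def gradMat (v : Rn 2 → Rn 3) (x : Rn 2) : Matrix (Fin 3) (Fin 2) ℝ :=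
  Matrix.of fun m j => pderiv' j (fun y => v y m) x

/-- The pullback metric (∇v)ᵀ ∇v. -/
def pullbackMetric (v : Rn 2 → Rn 3) (x : Rn 2) : Matrix (Fin 2) (Fin 2) ℝ :=
  Matrix.transpose (gradMat v x) * gradMat v x

/-- Cross product in ℝ³. -/
def cross3 (a b : Rn 3) : Rn 3 :=
  (EuclideanSpace.equiv (Fin 3) ℝ).symm
    ![a 1 * b 2 - a 2 * b 1, a 2 * b 0 - a 0 * b 2, a 0 * b 1 - a 1 * b 0]

/-- Unit normal of an immersion ℝ² → ℝ³. -/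
def unitNormal (v : Rn 2 → Rn 3) (x : Rn 2) : Rn 3 :=
  ‖cross3 (pderiv' 0 v x) (pderiv' 1 v x)‖⁻¹ • cross3 (pderiv' 0 v x) (pderiv' 1 v x)

/-- Second fundamental form II_{ij} = ∂_{ij} v · n of an immersion ℝ² → ℝ³. -/
def secondFF (v : Rn 2 → Rn 3) (i j : Fin 2) (x : Rn 2) : ℝ :=
  inner ℝ (pderiv' i (fun y => pderiv' j v y) x) (unitNormal v x)

/-- F(ε) = o(ε^t) as ε → 0⁺ (with F valued in ℝ≥0∞). -/
def LittleO (F : ℝ → ℝ≥0∞) (t : ℝ) : Prop :=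
  Tendsto (fun ε => F ε / ENNReal.ofReal (ε ^ t)) (𝓝[>] (0:ℝ)) (𝓝 0)

/-- f belongs locally (on Ω) to the little Hölder space c^{0,α}: around every point
there is a ball on which f can be approximated arbitrarily well by smooth functions
in the C^{0,α} norm. -/
def LittleHolderLocOn {n : ℕ} {E : Type} [NormedAddCommGroup E] [NormedSpace ℝ E]
    (α : ℝ) (f : Rn n → E) (Ω : Set (Rn n)) : Prop :=
  ∀ x ∈ Ω, ∃ r > 0, ball x r ⊆ Ω ∧
    ∀ δ > 0, ∃ g : Rn n → E, ContDiff ℝ (⊤ : ℕ∞) g ∧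
      (∀ y ∈ ball x r, ‖f y - g y‖ ≤ δ) ∧
      ∀ y ∈ ball x r, ∀ z ∈ ball x r, ‖(f y - g y) - (f z - g z)‖ ≤ δ * ‖y - z‖ ^ α

/-- The line through x with direction d. -/
def lineThrough {n : ℕ} (x d : Rn n) : Set (Rn n) := {y | ∃ t : ℝ, y = x + t • d}

/-- g is the weak (distributional) i-th partial derivative of f on Ω. -/
def IsWeakDerivOn {n : ℕ} (Ω : Set (Rn n)) (i : Fin n) (f g : Rn n → ℝ) : Prop :=
  ∀ φ : Rn n → ℝ, IsTestFun Ω φ →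
    ∫ x in Ω, f x * pderiv' i φ x = - ∫ x in Ω, g x * φ x

/-- A bounded smooth domain: a bounded open sublevel set of a smooth function whose
gradient does not vanish on the boundary. -/
def IsSmoothBoundedDomain {n : ℕ} (Ω : Set (Rn n)) : Prop :=
  IsOpen Ω ∧ Bornology.IsBounded Ω ∧ ∃ F : Rn n → ℝ, ContDiff ℝ (⊤ : ℕ∞) F ∧
    Ω = {x | F x < 0} ∧ ∀ x ∈ frontier Ω, fderiv ℝ F x ≠ 0

/-
Write `f_ε x - f x = ∫ φ_ε z • (f (x - z) - f x) dz`. Jensen's inequality for the probability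
density `φ_ε` and Tonelli give `‖f_ε - f‖_p^p ≤ ∫ φ_ε(z) D(z) dz`, where
`D(z) = ‖f(· - z) - f‖_p^p`. Since `φ_ε ≤ C ε^{-n}` vanishes outside `B_ε`, and
`ε^{-n} ≤ ε^{sp} |z|^{-(n+sp)}` on `B_ε`, this is at most `C ε^{sp} ∫_{B_ε} D(z) |z|^{-(n+sp)} dz`.
After the substitution `y = x - z` the integral of `D(z) |z|^{-(n+sp)}` over all of `ℝⁿ` is the
Gagliardo energy `[f]^p < ∞`, so its integral over `B_ε` tends to `0` as `ε → 0`.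
-/

theorem ENNReal.rpow_lintegral_le_lintegral_rpow {α : Type*} [MeasurableSpace α]
    (μ : Measure α) [IsProbabilityMeasure μ] {p : ℝ} (hp : 1 ≤ p) {h : α → ℝ≥0∞}
    (hh : AEMeasurable h μ) : (∫⁻ a, h a ∂μ) ^ p ≤ ∫⁻ a, h a ^ p ∂μ := by
  have hp0 : 0 < p := zero_lt_one.trans_le hp
  have hmono := eLpNorm'_le_eLpNorm'_of_exponent_le zero_lt_one hp μ hh.aestronglyMeasurable
  simp only [eLpNorm', enorm_eq_self, ENNReal.rpow_one, div_one] at hmono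
  calc (∫⁻ a, h a ∂μ) ^ p ≤ ((∫⁻ a, h a ^ p ∂μ) ^ (1 / p)) ^ p := by gcongr
    _ = ∫⁻ a, h a ^ p ∂μ := by rw [← ENNReal.rpow_mul, one_div_mul_cancel hp0.ne', ENNReal.rpow_one]

theorem ENNReal.rpow_lintegral_mul_le_lintegral_mul_rpow {α : Type*} [MeasurableSpace α]
    (μ : Measure α) {p : ℝ} (hp : 1 ≤ p) {w h : α → ℝ≥0∞}
    (hw : AEMeasurable w μ) (hh : AEMeasurable h μ) (hw1 : ∫⁻ a, w a ∂μ = 1) :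
    (∫⁻ a, w a * h a ∂μ) ^ p ≤ ∫⁻ a, w a * h a ^ p ∂μ := by
  have : IsProbabilityMeasure (μ.withDensity w) := ⟨by simpa using hw1⟩
  simpa only [lintegral_withDensity_eq_lintegral_mul₀ hw hh,
    lintegral_withDensity_eq_lintegral_mul₀ hw (hh.pow_const p), Pi.mul_apply] using
    rpow_lintegral_le_lintegral_rpow (μ.withDensity w) hp
      (hh.mono_ac (withDensity_absolutelyContinuous μ w))

section Translation

variable {V E : Type*} [NormedAddCommGroup V] [MeasurableSpace V] {μ : Measure V}
  [NormedAddCommGroup E]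

def translationDefect (μ : Measure V) (p : ℝ) (f : V → E) (z : V) : ℝ≥0∞ :=
  ∫⁻ x, ‖f (x - z) - f x‖ₑ ^ p ∂μ

theorem translationDefect_zero {p : ℝ} (hp : 0 < p) (f : V → E) :
    translationDefect μ p f 0 = 0 := by
  simp [translationDefect, ENNReal.zero_rpow_of_pos hp]

variable [NormedSpace ℝ V] [FiniteDimensional ℝ V] [BorelSpace V] [μ.IsAddHaarMeasure]

theorem MeasureTheory.AEStronglyMeasurable.comp_sub_prod_sub {f : V → E}
    (hf : AEStronglyMeasurable f μ) :
    AEStronglyMeasurable (fun q : V × V => f (q.1 - q.2) - f q.1) (μ.prod μ) :=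
  (hf.comp_quasiMeasurePreserving (quasiMeasurePreserving_sub_of_right_invariant μ μ)).sub
    hf.comp_fst

theorem lintegral_translationDefect_div_rpow {p : ℝ} (hp : 0 < p) {f : V → E}
    (hf : AEStronglyMeasurable f μ) (β : ℝ) :
    ∫⁻ z, translationDefect μ p f z / ENNReal.ofReal (‖z‖ ^ β) ∂μ =
      ∫⁻ x, ∫⁻ y, ENNReal.ofReal (‖f x - f y‖ ^ p / ‖x - y‖ ^ β) ∂μ ∂μ := by
  have hsub : ∀ x, ∫⁻ y, ENNReal.ofReal (‖f x - f y‖ ^ p / ‖x - y‖ ^ β) ∂μ =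
      ∫⁻ z, ENNReal.ofReal (‖f (x - z) - f x‖ ^ p / ‖z‖ ^ β) ∂μ := fun x => by
    rw [← lintegral_sub_left_eq_self _ x]
    simp [norm_sub_rev (f x)]
  have hmeas : AEMeasurable (Function.uncurry fun x z =>
      ENNReal.ofReal (‖f (x - z) - f x‖ ^ p / ‖z‖ ^ β)) (μ.prod μ) :=
    ENNReal.measurable_ofReal.comp_aemeasurable <|
      (hf.comp_sub_prod_sub.norm.aemeasurable.pow_const p).div
        (measurable_snd.norm.pow_const β).aemeasurable
  rw [lintegral_congr hsub, lintegral_lintegral_swap hmeas]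
  refine lintegral_congr fun z => ?_
  -- at `z = 0` the `ENNReal` quotient is `0 / 0 = 0` only because the defect vanishes there
  rcases eq_or_ne z 0 with rfl | hz
  · simp [translationDefect_zero hp, Real.zero_rpow hp.ne']
  have hzβ : 0 < ‖z‖ ^ β := Real.rpow_pos_of_pos (norm_pos_iff.mpr hz) β
  simp_rw [translationDefect, div_eq_mul_inv, ← lintegral_mul_const' _ _
    (ENNReal.inv_ne_top.mpr (ENNReal.ofReal_pos.mpr hzβ).ne'), ← div_eq_mul_inv,
    ENNReal.ofReal_div_of_pos hzβ, ← ofReal_norm,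
    ENNReal.ofReal_rpow_of_nonneg (norm_nonneg _) hp.le]

end Translation

section Kernel

variable {V E : Type*} [NormedAddCommGroup V] [NormedSpace ℝ V] [FiniteDimensional ℝ V]
  [MeasurableSpace V] [BorelSpace V] {μ : Measure V} [μ.IsAddHaarMeasure]
  [NormedAddCommGroup E] [NormedSpace ℝ E] [CompleteSpace E]
  {w : V → ℝ} {f : V → E} {p : ℝ}

theorem enorm_integral_smul_sub_rpow_le (hp : 1 ≤ p) (hw0 : ∀ z, 0 ≤ w z)
    (hw1 : ∫ z, w z ∂μ = 1) (hf : AEStronglyMeasurable f μ) {x : V}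
    (hwf : Integrable (fun z => w z • f (x - z)) μ) :
    ‖(∫ z, w z • f (x - z) ∂μ) - f x‖ₑ ^ p ≤
      ∫⁻ z, ENNReal.ofReal (w z) * ‖f (x - z) - f x‖ₑ ^ p ∂μ := by
  have hw : Integrable w μ := Integrable.of_integral_ne_zero (by simp [hw1])
  have hw1' : ∫⁻ z, ENNReal.ofReal (w z) ∂μ = 1 := by
    rw [← ofReal_integral_eq_lintegral_ofReal hw (ae_of_all _ hw0), hw1, ENNReal.ofReal_one]
  have hrepr : (∫ z, w z • f (x - z) ∂μ) - f x = ∫ z, w z • (f (x - z) - f x) ∂μ := by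
    simp_rw [smul_sub]
    rw [integral_sub hwf (hw.smul_const _), integral_smul_const, hw1, one_smul]
  have hnorm : ‖(∫ z, w z • f (x - z) ∂μ) - f x‖ₑ ≤
      ∫⁻ z, ENNReal.ofReal (w z) * ‖f (x - z) - f x‖ₑ ∂μ := by
    rw [hrepr]
    refine (enorm_integral_le_lintegral_enorm _).trans_eq (lintegral_congr fun z => ?_)
    rw [enorm_smul, Real.enorm_of_nonneg (hw0 z)]
  have hfx : AEMeasurable (fun z => ‖f (x - z) - f x‖ₑ) μ :=
    ((hf.comp_quasiMeasurePreserving (quasiMeasurePreserving_sub_left_of_right_invariant μ x)).sub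
      aestronglyMeasurable_const).enorm
  calc ‖(∫ z, w z • f (x - z) ∂μ) - f x‖ₑ ^ p
      ≤ (∫⁻ z, ENNReal.ofReal (w z) * ‖f (x - z) - f x‖ₑ ∂μ) ^ p := by gcongr
    _ ≤ _ := ENNReal.rpow_lintegral_mul_le_lintegral_mul_rpow μ hp
        hw.aemeasurable.ennreal_ofReal hfx hw1'

theorem lintegral_enorm_integral_smul_sub_rpow_le (hp : 1 ≤ p) (hw0 : ∀ z, 0 ≤ w z)
    (hw1 : ∫ z, w z ∂μ = 1) (hf : AEStronglyMeasurable f μ)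
    (hwf : ∀ x, Integrable (fun z => w z • f (x - z)) μ) :
    ∫⁻ x, ‖(∫ z, w z • f (x - z) ∂μ) - f x‖ₑ ^ p ∂μ ≤
      ∫⁻ z, ENNReal.ofReal (w z) * translationDefect μ p f z ∂μ := by
  have hw : AEMeasurable w μ := (Integrable.of_integral_ne_zero (by simp [hw1])).aemeasurable
  calc ∫⁻ x, ‖(∫ z, w z • f (x - z) ∂μ) - f x‖ₑ ^ p ∂μ
      ≤ ∫⁻ x, ∫⁻ z, ENNReal.ofReal (w z) * ‖f (x - z) - f x‖ₑ ^ p ∂μ ∂μ :=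
        lintegral_mono fun x => enorm_integral_smul_sub_rpow_le hp hw0 hw1 hf (hwf x)
    _ = ∫⁻ z, ∫⁻ x, ENNReal.ofReal (w z) * ‖f (x - z) - f x‖ₑ ^ p ∂μ ∂μ :=
        lintegral_lintegral_swap <| (hw.ennreal_ofReal.comp_snd).mul
          (hf.comp_sub_prod_sub.enorm.pow_const p)
    _ = ∫⁻ z, ENNReal.ofReal (w z) * translationDefect μ p f z ∂μ :=
        lintegral_congr fun z => lintegral_const_mul' _ _ ENNReal.ofReal_ne_top

end Kernel

theorem tendsto_setLIntegral_closedBall_nhdsGT {X : Type*} [MetricSpace X] [MeasurableSpace X]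
    [OpensMeasurableSpace X] [MeasurableSingletonClass X] {μ : Measure X} {h : X → ℝ≥0∞}
    (hint : ∫⁻ z, h z ∂μ ≠ ∞) {x : X} (hx : h x = 0) :
    Tendsto (fun ε => ∫⁻ z in closedBall x ε, h z ∂μ) (𝓝[>] 0) (𝓝 0) := by
  have hball : ∀ ε, μ.withDensity h (closedBall x ε) = ∫⁻ z in closedBall x ε, h z ∂μ :=
    fun ε => withDensity_apply h measurableSet_closedBall
  have hlim := tendsto_measure_biInter_gt (μ := μ.withDensity h) (s := closedBall x) (a := 0)
    (fun r _ => measurableSet_closedBall.nullMeasurableSet)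
    (fun _ _ _ hij => closedBall_subset_closedBall hij)
    ⟨1, one_pos, by rw [hball]; exact ne_top_of_le_ne_top hint (setLIntegral_le_lintegral _ _)⟩
  rw [biInter_gt_closedBall, closedBall_zero, withDensity_apply _ (measurableSet_singleton x),
    lintegral_singleton, hx, zero_mul] at hlim
  simpa only [Function.comp_def, hball] using hlim

theorem LittleO.of_le_mul_rpow {F G : ℝ → ℝ≥0∞} {t : ℝ}
    (hle : ∀ ε > 0, F ε ≤ G ε * ENNReal.ofReal (ε ^ t))
    (hG : Tendsto G (𝓝[>] 0) (𝓝 0)) : LittleO F t := by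
  refine tendsto_of_tendsto_of_tendsto_of_le_of_le' tendsto_const_nhds hG
    (Eventually.of_forall fun ε => zero_le) ?_
  filter_upwards [self_mem_nhdsWithin] with ε hε
  exact ENNReal.div_le_of_le_mul (hle ε hε)

theorem inv_pow_le_rpow_div_rpow_add {r ε t : ℝ} (hr : 0 < r) (hrε : r ≤ ε) (ht : 0 ≤ t)
    (n : ℕ) : (ε ^ n)⁻¹ ≤ ε ^ t / r ^ (n + t) := by
  have hε : 0 < ε := hr.trans_le hrε
  calc (ε ^ n)⁻¹ = ε ^ t / ε ^ (n + t) := by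
        rw [Real.rpow_add hε, Real.rpow_natCast, div_mul_cancel_right₀ (by positivity)]
    _ ≤ ε ^ t / r ^ (n + t) := by gcongr

def mollifierKernel {n : ℕ} (ψ : Rn n → ℝ) (ε : ℝ) (z : Rn n) : ℝ :=
  (ε ^ n)⁻¹ * ψ (ε⁻¹ • z)

theorem mollify_eq_integral_mollifierKernel {n : ℕ} {E : Type} [NormedAddCommGroup E]
    [NormedSpace ℝ E] (ψ : Rn n → ℝ) (ε : ℝ) (f : Rn n → E) (x : Rn n) :
    mollify ψ ε f x = ∫ z, mollifierKernel ψ ε z • f (x - z) :=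
  rfl

namespace IsMollifier

variable {n : ℕ} {ψ : Rn n → ℝ} (hψ : IsMollifier ψ) {ε : ℝ} (hε : 0 < ε)
include hψ

theorem hasCompactSupport : HasCompactSupport ψ :=
  (isCompact_closedBall 0 1).of_isClosed_subset (isClosed_tsupport ψ) hψ.supp

theorem continuous_mollifierKernel : Continuous (mollifierKernel ψ ε) :=
  continuous_const.mul (hψ.smooth.continuous.comp (continuous_const_smul _))

include hε

theorem mollifierKernel_nonneg (z : Rn n) : 0 ≤ mollifierKernel ψ ε z :=
  mul_nonneg (inv_nonneg.mpr (pow_pos hε n).le) (hψ.nonneg _)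

theorem mollifierKernel_eq_zero {z : Rn n} (hz : ε < ‖z‖) : mollifierKernel ψ ε z = 0 := by
  have hout : ε⁻¹ • z ∉ tsupport ψ := fun hmem => by
    have := mem_closedBall_zero_iff.mp (hψ.supp hmem)
    rw [norm_smul, norm_inv, Real.norm_of_nonneg hε.le, inv_mul_le_iff₀ hε, mul_one] at this
    exact this.not_gt hz
  simp [mollifierKernel, image_eq_zero_of_notMem_tsupport hout]

theorem hasCompactSupport_mollifierKernel : HasCompactSupport (mollifierKernel ψ ε) :=
  HasCompactSupport.intro (isCompact_closedBall 0 ε) fun z hz =>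
    hψ.mollifierKernel_eq_zero hε (by simpa using hz)

theorem integral_mollifierKernel : ∫ z, mollifierKernel ψ ε z = 1 := by
  have hscale := Measure.integral_comp_smul (volume : Measure (Rn n)) ψ ε⁻¹
  rw [finrank_euclideanSpace_fin, hψ.integral_one, smul_eq_mul, mul_one, inv_pow,
    inv_inv, abs_of_pos (pow_pos hε n)] at hscale
  simp only [mollifierKernel]
  rw [integral_const_mul, hscale, inv_mul_cancel₀ (pow_pos hε n).ne']

theorem integrable_mollifierKernel_smul {E : Type} [NormedAddCommGroup E] [NormedSpace ℝ E]
    {f : Rn n → E} {q : ℝ≥0∞} (hf : MemLp f q) (hq : 1 ≤ q) (x : Rn n) :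
    Integrable (fun z => mollifierKernel ψ ε z • f (x - z)) :=
  ((hf.comp_measurePreserving (Measure.measurePreserving_sub_left volume x)).locallyIntegrable
    hq).integrable_smul_left_of_hasCompactSupport hψ.continuous_mollifierKernel
    (hψ.hasCompactSupport_mollifierKernel hε)

theorem mollifierKernel_le_mul_rpow_div {C t : ℝ} (hC : ∀ y, ψ y ≤ C) (ht : 0 ≤ t)
    {z : Rn n} (hz : z ≠ 0) (hzε : ‖z‖ ≤ ε) :
    mollifierKernel ψ ε z ≤ C * (ε ^ t / ‖z‖ ^ (n + t)) := by
  rw [mollifierKernel, mul_comm C]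
  gcongr
  · exact hψ.nonneg _
  · exact inv_pow_le_rpow_div_rpow_add (norm_pos_iff.mpr hz) hzε ht n
  · exact hC _

theorem lintegral_enorm_mollify_sub_rpow_le {E : Type} [NormedAddCommGroup E]
    [NormedSpace ℝ E] [CompleteSpace E] {f : Rn n → E} {p s C : ℝ} (hp : 1 ≤ p) (hs : 0 ≤ s)
    (hf : MemLp f (ENNReal.ofReal p)) (hC : ∀ y, ψ y ≤ C) :
    ∫⁻ x, ‖mollify ψ ε f x - f x‖ₑ ^ p ≤ ENNReal.ofReal C * ENNReal.ofReal (ε ^ (s * p)) *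
      ∫⁻ z in closedBall 0 ε,
        translationDefect volume p f z / ENNReal.ofReal (‖z‖ ^ (n + s * p)) := by
  have hsp : 0 ≤ s * p := mul_nonneg hs (zero_le_one.trans hp)
  have hpoint : ∀ z, ENNReal.ofReal (mollifierKernel ψ ε z) * translationDefect volume p f z ≤
      (closedBall 0 ε).indicator (fun z => ENNReal.ofReal C * ENNReal.ofReal (ε ^ (s * p)) *
        (translationDefect volume p f z / ENNReal.ofReal (‖z‖ ^ (n + s * p)))) z := fun z => by
    rcases lt_or_ge ε ‖z‖ with hzε | hzε
    · simp [hψ.mollifierKernel_eq_zero hε hzε]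
    rcases eq_or_ne z 0 with rfl | hz
    · simp [translationDefect_zero (zero_lt_one.trans_le hp)]
    have hzβ : 0 < ‖z‖ ^ (n + s * p) := Real.rpow_pos_of_pos (norm_pos_iff.mpr hz) _
    rw [indicator_of_mem (mem_closedBall_zero_iff.mpr hzε)]
    calc ENNReal.ofReal (mollifierKernel ψ ε z) * translationDefect volume p f z
        ≤ ENNReal.ofReal (C * (ε ^ (s * p) / ‖z‖ ^ (n + s * p))) *
            translationDefect volume p f z := by
          gcongr
          exact hψ.mollifierKernel_le_mul_rpow_div hε hC hsp hz hzε
      _ = _ := by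
          rw [ENNReal.ofReal_mul ((hψ.nonneg 0).trans (hC 0)), ENNReal.ofReal_div_of_pos hzβ,
            div_eq_mul_inv, div_eq_mul_inv]
          ring
  calc ∫⁻ x, ‖mollify ψ ε f x - f x‖ₑ ^ p
      ≤ ∫⁻ z, ENNReal.ofReal (mollifierKernel ψ ε z) * translationDefect volume p f z := by
        simp_rw [mollify_eq_integral_mollifierKernel]
        exact lintegral_enorm_integral_smul_sub_rpow_le hp (hψ.mollifierKernel_nonneg hε)
          (hψ.integral_mollifierKernel hε) hf.1
          (hψ.integrable_mollifierKernel_smul hε hf (ENNReal.one_le_ofReal.mpr hp))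
    _ ≤ _ := by
        grw [lintegral_mono hpoint, lintegral_indicator measurableSet_closedBall,
          lintegral_const_mul' _ _ (by finiteness)]

theorem eLpNorm_mollify_sub_le {E : Type} [NormedAddCommGroup E]
    [NormedSpace ℝ E] [CompleteSpace E] {f : Rn n → E} {p s C : ℝ} (hp : 1 ≤ p) (hs : 0 ≤ s)
    (hf : MemLp f (ENNReal.ofReal p)) (hC : ∀ y, ψ y ≤ C) :
    eLpNorm (fun x => mollify ψ ε f x - f x) (ENNReal.ofReal p) volume ≤
      (ENNReal.ofReal C * ∫⁻ z in closedBall 0 ε,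
        translationDefect volume p f z / ENNReal.ofReal (‖z‖ ^ (n + s * p))) ^ (1 / p) *
      ENNReal.ofReal (ε ^ s) := by
  have hp0 : 0 < p := zero_lt_one.trans_le hp
  rw [eLpNorm_eq_lintegral_rpow_enorm_toReal (by simpa using hp0) ENNReal.ofReal_ne_top,
    ENNReal.toReal_ofReal hp0.le]
  grw [hψ.lintegral_enorm_mollify_sub_rpow_le hε hp hs hf hC]
  rw [mul_right_comm, ENNReal.mul_rpow_of_nonneg _ _ (by positivity),
    ENNReal.ofReal_rpow_of_pos (by positivity), ← Real.rpow_mul hε.le,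
    mul_assoc, mul_one_div_cancel hp0.ne', mul_one]

end IsMollifier

theorem mollification_Lp_rate_general
    {n : ℕ} {s p : ℝ} (hs1 : 0 < s) (hp : 1 ≤ p)
    (f : Rn n → ℝ) (hf : MemWsp s p Set.univ f)
    (ψ : Rn n → ℝ) (hψ : IsMollifier ψ) :
    LittleO (fun ε =>
      eLpNorm (fun x => mollify ψ ε f x - f x) (ENNReal.ofReal p) volume) s := by
  have hp0 : 0 < p := zero_lt_one.trans_le hp
  obtain ⟨hfLp, hfG⟩ := hf
  rw [Measure.restrict_univ] at hfLp
  obtain ⟨C, hC⟩ := hψ.hasCompactSupport.exists_bound_of_continuous hψ.smooth.continuous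
  have hGag : ∫⁻ z, translationDefect volume p f z / ENNReal.ofReal (‖z‖ ^ (n + s * p)) ≠ ∞ := by
    rw [lintegral_translationDefect_div_rpow hp0 hfLp.1]
    simp only [gagliardo, Measure.restrict_univ] at hfG
    exact ((ENNReal.rpow_lt_top_iff_of_pos (by positivity)).mp hfG).ne
  have hK := tendsto_setLIntegral_closedBall_nhdsGT hGag (x := 0)
    (by simp [translationDefect_zero hp0])
  refine LittleO.of_le_mul_rpow (fun ε hε => hψ.eLpNorm_mollify_sub_le hε hp hs1.le hfLp
    (fun y => (le_abs_self _).trans (hC y))) ?_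
  have hlim := (ENNReal.Tendsto.const_mul hK
    (Or.inr (ENNReal.ofReal_ne_top (r := C)))).ennrpow_const (1 / p)
  rwa [mul_zero, ENNReal.zero_rpow_of_pos (by positivity)] at hlim

/-- For f ∈ W^{s,p}(ℝⁿ), ‖f_ε − f‖_{L^p} = o(ε^s) as ε → 0⁺. -/
theorem mollification_Lp_rate
    {n : ℕ} (hn : 1 ≤ n) {s p : ℝ} (hs1 : 0 < s) (hs2 : s < 1) (hp : 1 ≤ p)
    (f : Rn n → ℝ) (hf : MemWsp s p Set.univ f)
    (ψ : Rn n → ℝ) (hψ : IsMollifier ψ) :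
    LittleO (fun ε =>
      eLpNorm (fun x => mollify ψ ε f x - f x) (ENNReal.ofReal p) volume) s :=
  mollification_Lp_rate_general hs1 hp f hf ψ hψ
end
end

section
/- Let s ∈ (0,1) and p ∈ (1,∞) with sp > 1, and let u ∈ W^{s,p}(ℝ). Then the continuous representative u* of u is (sp−1, p)-absolutely continuous: for every ε > 0 there exists δ > 0 such that whenever (I_i)_{i} is a finite or countable collection of pairwise disjoint intervals with Σ_i |I_i| < δ, one has Σ_i sup_{x≠y ∈ I_i} |u*(x)−u*(y)|^p / |x−y|^{sp−1} < ε. -/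
open MeasureTheory Metric Set Filter Topology
open scoped ENNReal

noncomputable section

/-- The one-dimensional Gagliardo seminorm [f]_{W^{s,p}(ℝ)}. -/
def gagliardo1 {E : Type} [NormedAddCommGroup E] (s p : ℝ) (f : ℝ → E) : ℝ≥0∞ :=
  (∫⁻ x : ℝ, ∫⁻ y : ℝ,
    ENNReal.ofReal (‖f x - f y‖ ^ p / |x - y| ^ (1 + s * p))) ^ (1 / p)

/-! Campanato's argument. For `c ∈ [a, b]` the averages of `f` over the intervals
`c + 2⁻ⁿ • ((a, b) - c)` converge to `f c`, and by Hölder's inequality consecutive averages differ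
by at most `(2 E) ^ (1 / p) * ((b - a) / 2ⁿ) ^ (s - 1 / p)`, where `E` is the Gagliardo energy of
`f` on `(a, b)²`. Since `s - 1 / p > 0`, summing the geometric series gives the Morrey estimate
`|f x - f y| ^ p ≤ C |x - y| ^ (s p - 1) E((x, y)²)`. The sum in the theorem is therefore at most
`C` times the energy of `v` on `⋃ Iᵢ × Iᵢ`, a set of measure at most `(∑ |Iᵢ|)²`, and this is small
by absolute continuity of the integral. -/

theorem integral_fst_sub_snd_prod_restrict {α : Type*} [MeasurableSpace α] {μ : Measure α}
    [SFinite μ] {f : α → ℝ} {A B : Set α} (hA0 : μ A ≠ 0) (hA : μ A ≠ ∞) (hB0 : μ B ≠ 0)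
    (hB : μ B ≠ ∞) (hfA : IntegrableOn f A μ) (hfB : IntegrableOn f B μ) :
    ∫ q, (f q.1 - f q.2) ∂(μ.restrict A).prod (μ.restrict B) =
      (μ A * μ B).toReal • (⨍ x in A, f x ∂μ - ⨍ y in B, f y ∂μ) := by
  have : IsFiniteMeasure (μ.restrict A) := isFiniteMeasure_restrict.mpr hA
  have : IsFiniteMeasure (μ.restrict B) := isFiniteMeasure_restrict.mpr hB
  have hA0' : (μ A).toReal ≠ 0 := ENNReal.toReal_ne_zero.mpr ⟨hA0, hA⟩
  have hB0' : (μ B).toReal ≠ 0 := ENNReal.toReal_ne_zero.mpr ⟨hB0, hB⟩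
  rw [integral_sub (hfA.comp_fst _) (hfB.comp_snd _), integral_fun_fst, integral_fun_snd]
  simp only [setAverage_eq, Measure.real, Measure.restrict_apply_univ, ENNReal.toReal_mul,
    smul_eq_mul]
  field_simp

theorem enorm_setAverage_sub_setAverage_rpow_mul_le {α : Type*} [MeasurableSpace α]
    {μ : Measure α} [SFinite μ] {p : ℝ} (hp : 1 ≤ p) {f : α → ℝ} {A B : Set α}
    (hA : μ A ≠ ∞) (hB : μ B ≠ ∞) (hfA : IntegrableOn f A μ) (hfB : IntegrableOn f B μ) :
    ‖⨍ x in A, f x ∂μ - ⨍ y in B, f y ∂μ‖ₑ ^ p * (μ A * μ B) ≤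
      ∫⁻ q in A ×ˢ B, ‖f q.1 - f q.2‖ₑ ^ p ∂μ.prod μ := by
  have hp0 : 0 < p := zero_lt_one.trans_le hp
  set Δ := ⨍ x in A, f x ∂μ - ⨍ y in B, f y ∂μ
  set m := μ A * μ B
  rcases eq_or_ne m 0 with hm0 | hm0
  · simp [hm0]
  have hmtop : m ≠ ∞ := ENNReal.mul_ne_top hA hB
  have : IsFiniteMeasure (μ.restrict A) := isFiniteMeasure_restrict.mpr hA
  have : IsFiniteMeasure (μ.restrict B) := isFiniteMeasure_restrict.mpr hB
  rw [← Measure.prod_restrict]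
  set I := ∫⁻ q, ‖f q.1 - f q.2‖ₑ ^ p ∂(μ.restrict A).prod (μ.restrict B)
  have hPuniv : (μ.restrict A).prod (μ.restrict B) univ = m := by
    rw [← univ_prod_univ, Measure.prod_prod, Measure.restrict_apply_univ,
      Measure.restrict_apply_univ]
  have hFint : Integrable (fun q : α × α => f q.1 - f q.2) ((μ.restrict A).prod (μ.restrict B)) :=
    (hfA.comp_fst _).sub (hfB.comp_snd _)
  have hF := integral_fst_sub_snd_prod_restrict (left_ne_zero_of_mul hm0) hA
    (right_ne_zero_of_mul hm0) hB hfA hfB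
  have holder : ‖Δ‖ₑ * m ≤ I ^ (1 / p) * m ^ (1 - 1 / p) := by
    have h := eLpNorm'_le_eLpNorm'_mul_rpow_measure_univ zero_lt_one hp hFint.aestronglyMeasurable
    simp only [eLpNorm'_eq_lintegral_enorm, ENNReal.rpow_one, div_one, hPuniv] at h
    have h' := (enorm_integral_le_lintegral_enorm _).trans h
    rwa [hF, enorm_smul, Real.enorm_of_nonneg ENNReal.toReal_nonneg,
      ENNReal.ofReal_toReal hmtop, mul_comm] at h'
  have hroot : ‖Δ‖ₑ * m ^ (1 / p) ≤ I ^ (1 / p) := by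
    rwa [← ENNReal.mul_le_mul_iff_left (c := m ^ (1 - 1 / p))
      (ENNReal.rpow_pos (pos_iff_ne_zero.mpr hm0) hmtop).ne'
      (ENNReal.rpow_ne_top_of_nonneg (sub_nonneg.mpr (div_le_one_of_le₀ hp hp0.le)) hmtop),
      mul_assoc, ← ENNReal.rpow_add _ _ hm0 hmtop, add_sub_cancel, ENNReal.rpow_one]
  calc ‖Δ‖ₑ ^ p * m = (‖Δ‖ₑ * m ^ (1 / p)) ^ p := by
        rw [ENNReal.mul_rpow_of_nonneg _ _ hp0.le, ← ENNReal.rpow_mul, one_div_mul_cancel hp0.ne',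
          ENNReal.rpow_one]
    _ ≤ (I ^ (1 / p)) ^ p := ENNReal.rpow_le_rpow hroot hp0.le
    _ = I := by rw [← ENNReal.rpow_mul, one_div_mul_cancel hp0.ne', ENNReal.rpow_one]

theorem tendsto_setAverage_of_subset_closedBall {α : Type*} [MetricSpace α] [ProperSpace α]
    [MeasurableSpace α] [OpensMeasurableSpace α] {μ : Measure α} [IsFiniteMeasureOnCompacts μ]
    {f : α → ℝ} (hf : Continuous f) {c : α} {J : ℕ → Set α} {r : ℕ → ℝ}
    (hJ0 : ∀ n, μ (J n) ≠ 0) (hJr : ∀ n, J n ⊆ closedBall c (r n))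
    (hr : Tendsto r atTop (𝓝 0)) :
    Tendsto (fun n => ⨍ x in J n, f x ∂μ) atTop (𝓝 (f c)) := by
  have hfin n : μ (J n) ≠ ∞ :=
    ((measure_mono (hJr n)).trans_lt (isCompact_closedBall c (r n)).measure_lt_top).ne
  have hint n : IntegrableOn f (J n) μ :=
    (hf.continuousOn.integrableOn_compact (isCompact_closedBall c (r n))).mono_set (hJr n)
  choose x hxJ hx using fun n => exists_le_setAverage (hJ0 n) (hfin n) (hint n)
  choose y hyJ hy using fun n => exists_setAverage_le (hJ0 n) (hfin n) (hint n)
  have hconv : ∀ z : ℕ → α, (∀ n, z n ∈ J n) → Tendsto (fun n => f (z n)) atTop (𝓝 (f c)) :=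
    fun z hz => (hf.tendsto c).comp <| tendsto_iff_dist_tendsto_zero.2 <|
      squeeze_zero (fun _ => dist_nonneg) (fun n => hJr n (hz n)) hr
  exact tendsto_of_tendsto_of_tendsto_of_le_of_le (hconv x hxJ) (hconv y hyJ) hx hy

theorem exists_pos_tsum_setLIntegral_prod_self_lt {α : Type*} [MeasurableSpace α]
    {μ : Measure α} [SFinite μ] {g : α × α → ℝ≥0∞} (hg : ∫⁻ q, g q ∂μ.prod μ ≠ ⊤)
    {ε : ℝ≥0∞} (hε : ε ≠ 0) :
    ∃ δ > 0, ∀ S : ℕ → Set α, (∀ i, MeasurableSet (S i)) → Pairwise (Function.onFun Disjoint S) →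
      ∑' i, μ (S i) < δ → ∑' i, ∫⁻ q in S i ×ˢ S i, g q ∂μ.prod μ < ε := by
  obtain ⟨η, hη, hsmall⟩ := exists_pos_setLIntegral_lt_of_measure_lt hg hε
  refine ⟨min η 1, lt_min hη one_pos, fun S hS hdisj hsum => ?_⟩
  rw [← lintegral_iUnion (fun i => (hS i).prod (hS i))
    (fun i j hij => (hdisj hij).set_prod_left _ _)]
  refine hsmall _ ?_
  calc (μ.prod μ) (⋃ i, S i ×ˢ S i) ≤ ∑' i, (μ.prod μ) (S i ×ˢ S i) := measure_iUnion_le _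
    _ = ∑' i, μ (S i) * μ (S i) := by simp only [Measure.prod_prod]
    _ ≤ ∑' i, μ (S i) * min η 1 :=
        ENNReal.tsum_le_tsum fun i => by gcongr; exact (ENNReal.le_tsum i).trans hsum.le
    _ = (∑' i, μ (S i)) * min η 1 := ENNReal.tsum_mul_right
    _ ≤ ∑' i, μ (S i) := mul_le_of_le_one_right' (min_le_right _ _)
    _ < min η 1 := hsum
    _ ≤ η := min_le_left _ _

def gagliardoKernel (s p : ℝ) (f : ℝ → ℝ) (q : ℝ × ℝ) : ℝ≥0∞ :=
  ENNReal.ofReal (|f q.1 - f q.2| ^ p / |q.1 - q.2| ^ (1 + s * p))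

def gagliardoEnergy (s p : ℝ) (f : ℝ → ℝ) (I : Set ℝ) : ℝ≥0∞ :=
  ∫⁻ q in I ×ˢ I, gagliardoKernel s p f q

section
variable {s p : ℝ} {f : ℝ → ℝ}

theorem measurable_gagliardoKernel (hf : Measurable f) : Measurable (gagliardoKernel s p f) := by
  unfold gagliardoKernel; fun_prop

theorem gagliardo1_eq_of_ae_eq {u v : ℝ → ℝ} (hv : Measurable v) (hvu : v =ᵐ[volume] u) :
    gagliardo1 s p u = (∫⁻ q, gagliardoKernel s p v q) ^ (1 / p) := by
  rw [Measure.volume_eq_prod, lintegral_prod _ (measurable_gagliardoKernel hv).aemeasurable,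
    gagliardo1]
  congr 1
  refine lintegral_congr_ae ?_
  filter_upwards [hvu] with x hx
  refine lintegral_congr_ae ?_
  filter_upwards [hvu] with y hy
  simp [gagliardoKernel, hx, hy, Real.norm_eq_abs]

theorem lintegral_enorm_sub_rpow_le (hp : 0 < p) (hsp : 0 ≤ 1 + s * p) {T : Set (ℝ × ℝ)}
    (hT : MeasurableSet T) {d : ℝ} (hd : ∀ q ∈ T, |q.1 - q.2| ≤ d) :
    ∫⁻ q in T, ‖f q.1 - f q.2‖ₑ ^ p ≤
      ENNReal.ofReal (d ^ (1 + s * p)) * ∫⁻ q in T, gagliardoKernel s p f q := by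
  rw [← lintegral_const_mul' _ _ ENNReal.ofReal_ne_top]
  refine setLIntegral_mono' hT fun q hq => ?_
  have hd0 : 0 ≤ d := (abs_nonneg _).trans (hd q hq)
  rw [Real.enorm_eq_ofReal_abs, ENNReal.ofReal_rpow_of_nonneg (abs_nonneg _) hp.le,
    gagliardoKernel, ← ENNReal.ofReal_mul (by positivity)]
  refine ENNReal.ofReal_le_ofReal ?_
  rcases eq_or_ne q.1 q.2 with h | h
  · simp only [h, sub_self, abs_zero, Real.zero_rpow hp.ne']
    positivity
  · have hpos : 0 < |q.1 - q.2| := abs_pos.mpr (sub_ne_zero.mpr h)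
    calc |f q.1 - f q.2| ^ p
        = |q.1 - q.2| ^ (1 + s * p) * (|f q.1 - f q.2| ^ p / |q.1 - q.2| ^ (1 + s * p)) := by
          field_simp
      _ ≤ d ^ (1 + s * p) * (|f q.1 - f q.2| ^ p / |q.1 - q.2| ^ (1 + s * p)) := by
          gcongr
          exact hd q hq

theorem abs_setAverage_sub_setAverage_rpow_le (hp : 1 ≤ p) (hsp : 0 ≤ 1 + s * p) {A B S : Set ℝ}
    (hA : MeasurableSet A) (hB : MeasurableSet B) (hAS : A ⊆ S) (hBS : B ⊆ S)
    (hAfin : volume A ≠ ∞) (hBfin : volume B ≠ ∞) (hfA : IntegrableOn f A) (hfB : IntegrableOn f B)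
    {d : ℝ} (hd0 : 0 ≤ d) (hd : ∀ x ∈ A, ∀ y ∈ B, |x - y| ≤ d) (hE : gagliardoEnergy s p f S ≠ ⊤) :
    |(⨍ x in A, f x) - ⨍ y in B, f y| ^ p * ((volume A).toReal * (volume B).toReal) ≤
      d ^ (1 + s * p) * (gagliardoEnergy s p f S).toReal := by
  have hp0 : 0 < p := zero_lt_one.trans_le hp
  have h : ‖(⨍ x in A, f x) - ⨍ y in B, f y‖ₑ ^ p * (volume A * volume B) ≤
      ENNReal.ofReal (d ^ (1 + s * p)) * gagliardoEnergy s p f S :=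
    calc _ ≤ ∫⁻ q in A ×ˢ B, ‖f q.1 - f q.2‖ₑ ^ p :=
          enorm_setAverage_sub_setAverage_rpow_mul_le hp hAfin hBfin hfA hfB
      _ ≤ ENNReal.ofReal (d ^ (1 + s * p)) * ∫⁻ q in A ×ˢ B, gagliardoKernel s p f q :=
          lintegral_enorm_sub_rpow_le hp0 hsp (hA.prod hB) fun q hq => hd q.1 hq.1 q.2 hq.2
      _ ≤ _ := by gcongr; exact lintegral_mono_set (prod_mono hAS hBS)
  have h' := ENNReal.toReal_mono (ENNReal.mul_ne_top ENNReal.ofReal_ne_top hE) h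
  rwa [Real.enorm_eq_ofReal_abs, ENNReal.ofReal_rpow_of_nonneg (abs_nonneg _) hp0.le,
    ENNReal.toReal_mul, ENNReal.toReal_mul, ENNReal.toReal_mul,
    ENNReal.toReal_ofReal (by positivity), ENNReal.toReal_ofReal (by positivity)] at h'

theorem abs_setAverage_Ioo_sub_setAverage_Ioo_le (hp : 1 ≤ p) (hsp : 0 ≤ 1 + s * p)
    (hf : Continuous f) {S : Set ℝ} {l l' d : ℝ} (hd : 0 < d) (hl : l ≤ l')
    (hl' : l' + d / 2 ≤ l + d) (hS : Ioo l (l + d) ⊆ S) (hE : gagliardoEnergy s p f S ≠ ⊤) :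
    |(⨍ x in Ioo l (l + d), f x) - ⨍ x in Ioo l' (l' + d / 2), f x| ≤
      (2 * (gagliardoEnergy s p f S).toReal) ^ (1 / p) * d ^ (s - 1 / p) := by
  have hp0 : 0 < p := zero_lt_one.trans_le hp
  set D := (gagliardoEnergy s p f S).toReal
  have hD : 0 ≤ D := ENNReal.toReal_nonneg
  have hsub : Ioo l' (l' + d / 2) ⊆ Ioo l (l + d) := Ioo_subset_Ioo hl hl'
  have h := abs_setAverage_sub_setAverage_rpow_le hp hsp measurableSet_Ioo
    measurableSet_Ioo hS (hsub.trans hS) (by simp) (by simp)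
    (hf.integrableOn_Icc.mono_set Ioo_subset_Icc_self)
    (hf.integrableOn_Icc.mono_set Ioo_subset_Icc_self) hd.le
    (fun x hx y hy => abs_sub_le_iff.2 ⟨by linarith [hx.2, hy.1], by linarith [hx.1, hy.2]⟩) hE
  rw [Real.volume_Ioo, Real.volume_Ioo, add_sub_cancel_left, add_sub_cancel_left,
    ENNReal.toReal_ofReal hd.le, ENNReal.toReal_ofReal (by positivity),
    show 1 + s * p = (s * p - 1) + 2 by ring, Real.rpow_add hd, Real.rpow_two] at h
  have hpow : |(⨍ x in Ioo l (l + d), f x) - ⨍ x in Ioo l' (l' + d / 2), f x| ^ p ≤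
      2 * D * d ^ (s * p - 1) :=
    le_of_mul_le_mul_right (by linarith) (by positivity : 0 < d * (d / 2))
  rw [← Real.rpow_le_rpow_iff (abs_nonneg _) (by positivity) hp0, Real.mul_rpow (by positivity)
    (by positivity), ← Real.rpow_mul (by positivity), ← Real.rpow_mul hd.le,
    one_div_mul_cancel hp0.ne', Real.rpow_one, sub_mul, one_div_mul_cancel hp0.ne']
  exact hpow

theorem two_rpow_neg_lt_one (hp : 0 < p) (hsp : 1 < s * p) : (2 : ℝ) ^ (-(s - 1 / p)) < 1 := by
  refine Real.rpow_lt_one_of_one_lt_of_neg one_lt_two (neg_neg_of_pos ?_)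
  rw [sub_pos, div_lt_iff₀ hp]
  exact hsp

theorem abs_sub_setAverage_Ioo_le (hp : 1 ≤ p) (hsp : 1 < s * p) (hf : Continuous f)
    {a b c : ℝ} (hab : a < b) (hc : c ∈ Icc a b) (hE : gagliardoEnergy s p f (Ioo a b) ≠ ⊤) :
    |f c - ⨍ x in Ioo a b, f x| ≤
      (2 * (gagliardoEnergy s p f (Ioo a b)).toReal) ^ (1 / p) * (b - a) ^ (s - 1 / p) /
        (1 - 2 ^ (-(s - 1 / p))) := by
  have hρ := two_rpow_neg_lt_one (zero_lt_one.trans_le hp) hsp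
  -- `J n = c + 2⁻¹ ^ n • (Ioo a b - c)`
  set d : ℕ → ℝ := fun n => (b - a) * 2⁻¹ ^ n
  set l : ℕ → ℝ := fun n => c + (a - c) * 2⁻¹ ^ n
  set J : ℕ → Set ℝ := fun n => Ioo (l n) (l n + d n)
  have ht n : (0 : ℝ) < 2⁻¹ ^ n ∧ (2⁻¹ : ℝ) ^ n ≤ 1 :=
    ⟨by positivity, pow_le_one₀ (by norm_num) (by norm_num)⟩
  have hd n : 0 < d n := mul_pos (by linarith) (ht n).1
  have hJ n : J n ⊆ Ioo a b := by
    obtain ⟨h0, h1⟩ := ht n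
    refine Ioo_subset_Ioo ?_ ?_ <;> simp only [l, d] <;> nlinarith [hc.1, hc.2]
  have hstep n : dist (⨍ x in J n, f x) (⨍ x in J (n + 1), f x) ≤
      (2 * (gagliardoEnergy s p f (Ioo a b)).toReal) ^ (1 / p) * (b - a) ^ (s - 1 / p) *
        (2 ^ (-(s - 1 / p))) ^ n := by
    have hJsucc : J (n + 1) = Ioo (l (n + 1)) (l (n + 1) + d n / 2) := by
      simp only [J, l, d, pow_succ]; ring_nf
    obtain ⟨h0, h1⟩ := ht n
    have h := abs_setAverage_Ioo_sub_setAverage_Ioo_le hp (by linarith) hf (hd n) (l := l n)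
      (l' := l (n + 1)) (by simp only [l, pow_succ]; nlinarith [hc.1])
      (by simp only [l, d, pow_succ]; nlinarith [hc.2]) (hJ n) hE
    have hdθ : d n ^ (s - 1 / p) = (b - a) ^ (s - 1 / p) * (2 ^ (-(s - 1 / p))) ^ n := by
      rw [Real.mul_rpow (by linarith) h0.le, ← Real.rpow_pow_comm (by norm_num),
        Real.inv_rpow (by norm_num), ← Real.rpow_neg (by norm_num)]
    rwa [Real.dist_eq, hJsucc, mul_assoc, ← hdθ]
  have hlim : Tendsto (fun n => ⨍ x in J n, f x) atTop (𝓝 (f c)) := by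
    refine tendsto_setAverage_of_subset_closedBall hf (r := d) (fun n => ?_) (fun n x hx => ?_) ?_
    · simp [J, hd n]
    · obtain ⟨h0, h1⟩ := ht n
      rw [mem_closedBall, Real.dist_eq, abs_le]
      simp only [J, l, d, mem_Ioo] at hx ⊢
      constructor <;> nlinarith [hc.1, hc.2]
    · simpa using
        (tendsto_pow_atTop_nhds_zero_of_lt_one (by norm_num) (by norm_num)).const_mul (b - a)
  have h := dist_le_of_le_geometric_of_tendsto₀ _ _ hρ hstep hlim
  simpa [J, l, d, dist_comm, Real.dist_eq] using h

def morreyConst (s p : ℝ) : ℝ := 2 ^ (p + 1) / (1 - 2 ^ (-(s - 1 / p))) ^ p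

theorem morreyConst_pos (hp : 0 < p) (hsp : 1 < s * p) : 0 < morreyConst s p := by
  have : 0 < 1 - (2 : ℝ) ^ (-(s - 1 / p)) := sub_pos.2 (two_rpow_neg_lt_one hp hsp)
  unfold morreyConst
  positivity

theorem ofReal_rpow_div_le_morreyConst_mul (hp : 1 ≤ p) (hsp : 1 < s * p) (hf : Continuous f)
    {x y : ℝ} (hxy : x < y) :
    ENNReal.ofReal (|f x - f y| ^ p / (y - x) ^ (s * p - 1)) ≤
      ENNReal.ofReal (morreyConst s p) * gagliardoEnergy s p f (Ioo x y) := by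
  have hp0 : 0 < p := zero_lt_one.trans_le hp
  have hC := morreyConst_pos hp0 hsp
  rcases eq_or_ne (gagliardoEnergy s p f (Ioo x y)) ⊤ with hE | hE
  · simp [hE, ENNReal.mul_top, hC]
  set D := (gagliardoEnergy s p f (Ioo x y)).toReal
  have hρ : 0 < 1 - (2 : ℝ) ^ (-(s - 1 / p)) := sub_pos.2 (two_rpow_neg_lt_one hp0 hsp)
  have hyx : 0 < y - x := sub_pos.2 hxy
  have hx := abs_sub_setAverage_Ioo_le hp hsp hf hxy (left_mem_Icc.2 hxy.le) hE
  have hy := abs_sub_setAverage_Ioo_le hp hsp hf hxy (right_mem_Icc.2 hxy.le) hE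
  have hxy' : |f x - f y| ≤
      2 * ((2 * D) ^ (1 / p) * (y - x) ^ (s - 1 / p) / (1 - 2 ^ (-(s - 1 / p)))) := by
    rw [abs_sub_comm] at hy
    linarith [abs_sub_le (f x) (⨍ t in Ioo x y, f t) (f y)]
  have hpow : |f x - f y| ^ p ≤ morreyConst s p * D * (y - x) ^ (s * p - 1) := by
    refine (Real.rpow_le_rpow (abs_nonneg _) hxy' hp0.le).trans_eq ?_
    rw [Real.mul_rpow (by norm_num) (by positivity), Real.div_rpow (by positivity) hρ.le,
      Real.mul_rpow (by positivity) (by positivity), ← Real.rpow_mul (by positivity),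
      ← Real.rpow_mul hyx.le, one_div_mul_cancel hp0.ne', Real.rpow_one, sub_mul,
      one_div_mul_cancel hp0.ne', morreyConst, Real.rpow_add two_pos, Real.rpow_one]
    ring
  rw [← ENNReal.ofReal_toReal hE, ← ENNReal.ofReal_mul hC.le]
  exact ENNReal.ofReal_le_ofReal ((div_le_iff₀ (by positivity)).2 hpow)

theorem iSup_ofReal_rpow_div_le_morreyConst_mul (hp : 1 ≤ p) (hsp : 1 < s * p)
    (hf : Continuous f) {I : Set ℝ} (hI : I.OrdConnected) :
    ⨆ x ∈ I, ⨆ y ∈ I, ENNReal.ofReal (|f x - f y| ^ p / |x - y| ^ (s * p - 1)) ≤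
      ENNReal.ofReal (morreyConst s p) * gagliardoEnergy s p f I := by
  have hmono {x y : ℝ} (hx : x ∈ I) (hy : y ∈ I) (hxy : x < y) :
      ENNReal.ofReal (|f x - f y| ^ p / |x - y| ^ (s * p - 1)) ≤
        ENNReal.ofReal (morreyConst s p) * gagliardoEnergy s p f I := by
    rw [abs_sub_comm x y, abs_of_pos (sub_pos.2 hxy)]
    refine (ofReal_rpow_div_le_morreyConst_mul hp hsp hf hxy).trans ?_
    have hsub : Ioo x y ⊆ I := Ioo_subset_Icc_self.trans (hI.out hx hy)
    gcongr
    exact lintegral_mono_set (prod_mono hsub hsub)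
  refine iSup₂_le fun x hx => iSup₂_le fun y hy => ?_
  rcases lt_trichotomy x y with hxy | rfl | hyx
  · exact hmono hx hy hxy
  · simp [Real.zero_rpow (by linarith : s * p - 1 ≠ 0)]
  · rw [abs_sub_comm (f x), abs_sub_comm x]
    exact hmono hy hx hyx

end

theorem fractional_absolute_continuity_general
    {s p : ℝ} (hp : 1 < p) (hsp : 1 < s * p)
    (u : ℝ → ℝ) (hu2 : gagliardo1 s p u < ⊤)
    (v : ℝ → ℝ) (hv : Continuous v) (hvu : v =ᵐ[volume] u) :
    ∀ ε : ℝ, 0 < ε → ∃ δ : ℝ, 0 < δ ∧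
      ∀ a b : ℕ → ℝ, (∀ i, a i ≤ b i) →
        (Pairwise fun i j => Disjoint (Set.Ioo (a i) (b i)) (Set.Ioo (a j) (b j))) →
        (∑' i, ENNReal.ofReal (b i - a i)) < ENNReal.ofReal δ →
        (∑' i, ⨆ x ∈ Set.Ioo (a i) (b i), ⨆ y ∈ Set.Ioo (a i) (b i),
            ENNReal.ofReal (|v x - v y| ^ p / |x - y| ^ (s * p - 1)))
          < ENNReal.ofReal ε := by
  intro ε hε
  have hC := morreyConst_pos (zero_lt_one.trans hp) hsp
  have htot : ∫⁻ q, gagliardoKernel s p v q ≠ ⊤ := by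
    rw [gagliardo1_eq_of_ae_eq hv.measurable hvu,
      ENNReal.rpow_lt_top_iff_of_pos (one_div_pos.2 (zero_lt_one.trans hp))] at hu2
    exact hu2.ne
  obtain ⟨η, hη, hsmall⟩ := exists_pos_tsum_setLIntegral_prod_self_lt htot
    (ENNReal.ofReal_pos.2 (div_pos hε hC)).ne'
  obtain ⟨δ, -, hδ, hδη⟩ := ENNReal.lt_iff_exists_real_btwn.1 hη
  refine ⟨δ, ENNReal.ofReal_pos.1 hδ, fun a b _ hdisj hsum => ?_⟩
  calc _ ≤ ∑' i, ENNReal.ofReal (morreyConst s p) * gagliardoEnergy s p v (Ioo (a i) (b i)) :=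
        ENNReal.tsum_le_tsum fun i =>
          iSup_ofReal_rpow_div_le_morreyConst_mul hp.le hsp hv ordConnected_Ioo
    _ = ENNReal.ofReal (morreyConst s p) * ∑' i, gagliardoEnergy s p v (Ioo (a i) (b i)) :=
        ENNReal.tsum_mul_left
    _ < ENNReal.ofReal (morreyConst s p) * ENNReal.ofReal (ε / morreyConst s p) := by
        refine ENNReal.mul_lt_mul_right (ENNReal.ofReal_pos.2 hC).ne' ENNReal.ofReal_ne_top ?_
        refine hsmall _ (fun i => measurableSet_Ioo) hdisj ?_
        simpa only [Real.volume_Ioo] using hsum.trans hδη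
    _ = ENNReal.ofReal ε := by rw [← ENNReal.ofReal_mul hC.le, mul_div_cancel₀ _ hC.ne']

/-- The continuous representative of u ∈ W^{s,p}(ℝ) with sp > 1 is
(sp−1, p)-absolutely continuous. -/
theorem fractional_absolute_continuity
    {s p : ℝ} (hs1 : 0 < s) (hs2 : s < 1) (hp : 1 < p) (hsp : 1 < s * p)
    (u : ℝ → ℝ) (hu1 : MemLp u (ENNReal.ofReal p) volume) (hu2 : gagliardo1 s p u < ⊤)
    (v : ℝ → ℝ) (hv : Continuous v) (hvu : v =ᵐ[volume] u) :
    ∀ ε : ℝ, 0 < ε → ∃ δ : ℝ, 0 < δ ∧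
      ∀ a b : ℕ → ℝ, (∀ i, a i ≤ b i) →
        (Pairwise fun i j => Disjoint (Set.Ioo (a i) (b i)) (Set.Ioo (a j) (b j))) →
        (∑' i, ENNReal.ofReal (b i - a i)) < ENNReal.ofReal δ →
        (∑' i, ⨆ x ∈ Set.Ioo (a i) (b i), ⨆ y ∈ Set.Ioo (a i) (b i),
            ENNReal.ofReal (|v x - v y| ^ p / |x - y| ^ (s * p - 1)))
          < ENNReal.ofReal ε :=
  fractional_absolute_continuity_general hp hsp u hu2 v hv hvu
end
end
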